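/- The Baumslag–Solitar group BS(m,n) = ⟨r, s | r s^m r⁻¹ = s^n⟩ with mn ≠ 0 admits no embedding into any solvable group when |m|, |n|, 1 are pairwise distinct; equivalently, BS(m,n) is not solvable, and indeed no finite-index subgroup of BS(m,n) is solvable, when |m| ≠ 1 and |n| ≠ 1. -/

import Mathlib

open Multiplicative HNNExtension

namespace BSaux

abbrev MZ := Multiplicative ℤ

def θ (m : ℤ) : MZ →* MZ := zpowersHom MZ (ofAdd m)

lemma θ_apply (m : ℤ) (x : MZ) : θ m x = ofAdd (toAdd x * m) := by
  simp [θ, zpowersHom_apply, ← ofAdd_zsmul, smul_eq_mul]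

lemma θ_inj {m : ℤ} (hm : m ≠ 0) : Function.Injective (θ m) := by
  intro x y h
  rw [θ_apply, θ_apply] at h
  have h2 : toAdd x * m = toAdd y * m := by exact_mod_cast congrArg toAdd h
  have : toAdd x = toAdd y := by
    exact mul_right_cancel₀ hm h2
  exact_mod_cast congrArg ofAdd this

lemma mem_θ_range {m : ℤ} {x : MZ} : x ∈ (θ m).range ↔ m ∣ toAdd x := by
  constructor
  · rintro ⟨y, rfl⟩
    rw [θ_apply]
    exact ⟨toAdd y, by simp [mul_comm]⟩
  · rintro ⟨k, hk⟩
    refine ⟨ofAdd k, ?_⟩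
    rw [θ_apply]
    simp only [toAdd_ofAdd]
    rw [mul_comm, ← hk]
    simp

lemma not_mem_θ_range {m : ℤ} (hm : |m| ≠ 1) {x : MZ} (hx : toAdd x = 1 ∨ toAdd x = -1) :
    x ∉ (θ m).range := by
  rw [mem_θ_range]
  intro hdvd
  have hu : IsUnit m := by
    rcases hx with h | h <;> rw [h] at hdvd
    · exact isUnit_of_dvd_one hdvd
    · exact isUnit_of_dvd_one (by simpa using hdvd.neg_right)
  rcases Int.isUnit_iff.mp hu with rfl | rfl <;> simp at hm

noncomputable def φAB (hm : m ≠ 0) (hn : n ≠ 0) : (θ m).range ≃* (θ n).range :=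
  (MonoidHom.ofInjective (θ_inj hm)).symm.trans (MonoidHom.ofInjective (θ_inj hn))

lemma φAB_spec (hm : m ≠ 0) (hn : n ≠ 0) (a : (θ m).range) :
    ∃ x : MZ, (a : MZ) = θ m x ∧ ((φAB hm hn a : (θ n).range) : MZ) = θ n x := by
  refine ⟨(MonoidHom.ofInjective (θ_inj hm)).symm a, ?_, ?_⟩
  · exact (MonoidHom.apply_ofInjective_symm (θ_inj hm) a).symm
  · simp [φAB, MonoidHom.ofInjective]; rfl

lemma φAB_apply (hm : m ≠ 0) (hn : n ≠ 0) (x : MZ) (hx : θ m x ∈ (θ m).range) :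
    ((φAB hm hn ⟨θ m x, hx⟩ : (θ n).range) : MZ) = θ n x := by
  obtain ⟨y, hy1, hy2⟩ := φAB_spec hm hn ⟨θ m x, hx⟩
  have : x = y := θ_inj hm (by simpa using hy1)
  rw [hy2, this]

end BSaux

/-- The Baumslag–Solitar group `BS(m,n) = ⟨r, s | r s^m r⁻¹ = s^n⟩`,
with `r = of 0` and `s = of 1`. -/
def BaumslagSolitar (m n : ℤ) : Type :=
  PresentedGroup
    ({FreeGroup.of (0 : Fin 2) * (FreeGroup.of (1 : Fin 2)) ^ m *
        (FreeGroup.of (0 : Fin 2))⁻¹ * ((FreeGroup.of (1 : Fin 2)) ^ n)⁻¹} :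
      Set (FreeGroup (Fin 2)))

instance (m n : ℤ) : Group (BaumslagSolitar m n) :=
  inferInstanceAs (Group (PresentedGroup _))

namespace BSaux

variable (m n : ℤ)

abbrev bsRels : Set (FreeGroup (Fin 2)) :=
  {FreeGroup.of (0 : Fin 2) * (FreeGroup.of (1 : Fin 2)) ^ m *
        (FreeGroup.of (0 : Fin 2))⁻¹ * ((FreeGroup.of (1 : Fin 2)) ^ n)⁻¹}

def bsr : BaumslagSolitar m n := PresentedGroup.of (rels := bsRels m n) 0
def bss : BaumslagSolitar m n := PresentedGroup.of (rels := bsRels m n) 1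

lemma bs_rel : bsr m n * bss m n ^ m * (bsr m n)⁻¹ = bss m n ^ n := by
  have h1 : (PresentedGroup.mk (bsRels m n))
      (FreeGroup.of (0 : Fin 2) * (FreeGroup.of (1 : Fin 2)) ^ m *
        (FreeGroup.of (0 : Fin 2))⁻¹ * ((FreeGroup.of (1 : Fin 2)) ^ n)⁻¹) = 1 := by
    refine (QuotientGroup.eq_one_iff _).mpr ?_
    exact Subgroup.subset_normalClosure rfl
  simp only [map_mul, map_zpow, map_inv] at h1
  have h2 : bsr m n * bss m n ^ m * (bsr m n)⁻¹ * (bss m n ^ n)⁻¹ = 1 := h1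
  exact mul_inv_eq_one.mp h2

lemma bs_rel_zpow (k : ℤ) : bsr m n * bss m n ^ (m * k) * (bsr m n)⁻¹ = bss m n ^ (n * k) := by
  have := congrArg (· ^ k) (bs_rel m n)
  simpa [← zpow_mul, mul_zpow, conj_zpow, mul_comm] using this

end BSaux

namespace BSaux

variable {m n : ℤ}

/-- the HNN extension `⟨ℤ, t | t (m) t⁻¹ = (n)⟩`. -/
abbrev HNNBS (hm : m ≠ 0) (hn : n ≠ 0) : Type :=
  HNNExtension MZ (θ m).range (θ n).range (φAB hm hn)

lemma ofAdd_m_mem (m : ℤ) : ofAdd m ∈ (θ m).range := ⟨ofAdd 1, by rw [θ_apply]; simp⟩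

lemma θ_one (m : ℤ) : θ m (ofAdd 1) = ofAdd m := by rw [θ_apply]; simp

noncomputable def Φ (hm : m ≠ 0) (hn : n ≠ 0) : BaumslagSolitar m n →* HNNBS hm hn := by
  refine PresentedGroup.toGroup (f := fun i : Fin 2 =>
    if i = 0 then t else HNNExtension.of (ofAdd (1:ℤ))) ?_
  rintro r hr
  rw [Set.mem_singleton_iff] at hr
  subst hr
  simp only [map_mul, map_zpow, map_inv, FreeGroup.lift_apply_of, if_pos rfl]
  norm_num
  have h1 : (HNNExtension.of (ofAdd (1:ℤ)) : HNNBS hm hn) ^ m = HNNExtension.of (ofAdd m) := by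
    rw [← map_zpow]
    congr 1
    simp [← ofAdd_zsmul, smul_eq_mul]
  have h2 : (HNNExtension.of (ofAdd (1:ℤ)) : HNNBS hm hn) ^ n = HNNExtension.of (ofAdd n) := by
    rw [← map_zpow]
    congr 1
    simp [← ofAdd_zsmul, smul_eq_mul]
  rw [h1, h2]
  have key : ((φAB hm hn ⟨ofAdd m, ofAdd_m_mem m⟩ : (θ n).range) : MZ) = ofAdd n := by
    have e : (⟨ofAdd m, ofAdd_m_mem m⟩ : (θ m).range) = ⟨θ m (ofAdd 1), MonoidHom.mem_range.mpr ⟨ofAdd 1, rfl⟩⟩ :=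
      Subtype.ext (θ_one m).symm
    rw [e, φAB_apply hm hn (ofAdd 1), θ_one]
  have h3 := equiv_eq_conj (φ := φAB hm hn) ⟨ofAdd m, ofAdd_m_mem m⟩
  rw [key] at h3
  rw [← h3]
  group

@[simp] lemma Φ_r (hm : m ≠ 0) (hn : n ≠ 0) : Φ hm hn (bsr m n) = t := by
  have : Φ hm hn (bsr m n) = if (0 : Fin 2) = 0 then (t : HNNBS hm hn)
      else HNNExtension.of (ofAdd (1:ℤ)) := PresentedGroup.toGroup.of _
  simpa using this

@[simp] lemma Φ_s (hm : m ≠ 0) (hn : n ≠ 0) :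
    Φ hm hn (bss m n) = HNNExtension.of (ofAdd (1:ℤ)) := by
  have : Φ hm hn (bss m n) = if (1 : Fin 2) = 0 then (t : HNNBS hm hn)
      else HNNExtension.of (ofAdd (1:ℤ)) := PresentedGroup.toGroup.of _
  simpa using this

noncomputable def Ψ (hm : m ≠ 0) (hn : n ≠ 0) : HNNBS hm hn →* BaumslagSolitar m n := by
  refine HNNExtension.lift (zpowersHom _ (bss m n)) (bsr m n) ?_
  rintro a
  obtain ⟨x, hx1, hx2⟩ := φAB_spec hm hn a
  rw [hx1, hx2]
  simp only [zpowersHom_apply, θ_apply, toAdd_ofAdd]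
  have h := bs_rel_zpow m n (toAdd x)
  rw [mul_inv_eq_iff_eq_mul] at h
  rw [mul_comm (toAdd x) m, mul_comm (toAdd x) n]
  exact h

@[simp] lemma Ψ_t (hm : m ≠ 0) (hn : n ≠ 0) : Ψ hm hn t = bsr m n := by
  simp [Ψ]

@[simp] lemma Ψ_of (hm : m ≠ 0) (hn : n ≠ 0) (g : MZ) :
    Ψ hm hn (HNNExtension.of g) = bss m n ^ (toAdd g) := by
  simp [Ψ]

lemma Φ_comp_Ψ (hm : m ≠ 0) (hn : n ≠ 0) :
    (Φ hm hn).comp (Ψ hm hn) = MonoidHom.id (HNNBS hm hn) := by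
  refine hom_ext ?_ ?_
  · refine MonoidHom.ext_mint ?_
    simp [map_zpow]
  · simp

lemma Ψ_inj (hm : m ≠ 0) (hn : n ≠ 0) : Function.Injective (Ψ hm hn) := by
  have h := Φ_comp_Ψ hm hn
  intro x y hxy
  have := congrArg (Φ hm hn) hxy
  calc x = (Φ hm hn).comp (Ψ hm hn) x := by rw [h]; rfl
  _ = (Φ hm hn).comp (Ψ hm hn) y := this
  _ = y := by rw [h]; rfl

end BSaux

namespace BSaux

/-! ### Reduced words in the free group have the chain property -/

def Rfree {α : Type*} (p q : α × Bool) : Prop := p.1 = q.1 → p.2 = q.2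

lemma chain'_of_reduce {α : Type*} [DecidableEq α] :
    ∀ L : List (α × Bool), FreeGroup.reduce L = L → L.Chain' Rfree := by
  intro L
  induction L with
  | nil => intro _; exact List.isChain_nil
  | cons x L ih =>
    intro h
    rw [FreeGroup.reduce.cons] at h
    rcases hr : FreeGroup.reduce L with _ | ⟨hd, tl⟩
    · rw [hr] at h
      simp only at h
      injection h with h1 h2
      rw [← h2]
      exact List.isChain_singleton x
    · rw [hr] at h
      simp only at h
      by_cases hc : x.1 = hd.1 ∧ x.2 = !hd.2
      · rw [if_pos hc] at h
        exfalso
        have hlen : (FreeGroup.reduce L).length ≤ L.length :=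
          FreeGroup.Red.length_le (FreeGroup.reduce.red)
        rw [hr] at hlen
        have := congrArg List.length h
        simp at this hlen
        omega
      · rw [if_neg hc] at h
        injection h with h1 h2
        have hL : L = hd :: tl := h2.symm
        subst hL
        refine List.isChain_cons_cons.mpr ⟨?_, ih (by rw [hr])⟩
        intro hfst
        by_contra hsnd
        exact hc ⟨hfst, by
          cases hx2 : x.2 <;> cases hd2 : hd.2 <;> simp_all⟩

lemma chain'_toWord {α : Type*} [DecidableEq α] (w : FreeGroup α) :
    w.toWord.Chain' Rfree :=
  chain'_of_reduce _ (FreeGroup.reduce_toWord w)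

end BSaux

namespace BSaux

/-! ### Building reduced HNN words from reduced free-group words -/

def eps (e : Bool) : ℤˣ := if e then 1 else -1

/-- the "head marker": `ofAdd 1` if the word starts with the second generator. -/
def hmk : List (Fin 2 × Bool) → MZ
  | [] => 1
  | (i, _) :: _ => if i = 0 then 1 else ofAdd 1

def blocks (a b : ℕ) : List (Fin 2 × Bool) → List (ℤˣ × MZ)
  | [] => []
  | (i, e) :: L =>
    List.replicate ((if i = 0 then a else b) - 1) (eps e, 1) ++
      (eps e, (if i = 0 then 1 else (ofAdd (1:ℤ))⁻¹) * hmk L) :: blocks a b L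

lemma blocks_ne_nil (a b : ℕ) (L : List (Fin 2 × Bool)) (hL : L ≠ []) :
    blocks a b L ≠ [] := by
  match L with
  | (i, e) :: L => simp [blocks]

lemma blocks_head_fst (a b : ℕ) (L : List (Fin 2 × Bool)) :
    (blocks a b L).head?.map Prod.fst = L.head?.map (fun p => eps p.2) := by
  match L with
  | [] => simp [blocks]
  | (i, e) :: L =>
    rw [blocks]
    rcases hc : (if i = 0 then a else b) - 1 with _ | c
    · simp [hc]
    · simp [hc, List.replicate_succ]

end BSaux

namespace BSaux

variable {m n : ℤ}

lemma not_mem_toSubgroup (hm1 : |m| ≠ 1) (hn1 : |n| ≠ 1) (u : ℤˣ) {x : MZ}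
    (hx : toAdd x = 1 ∨ toAdd x = -1) :
    x ∉ toSubgroup (θ m).range (θ n).range u := by
  rcases Int.units_eq_one_or u with rfl | rfl
  · rw [toSubgroup_one]
    exact not_mem_θ_range hm1 hx
  · rw [toSubgroup_neg_one]
    exact not_mem_θ_range hn1 hx

lemma blocks_chain (hm1 : |m| ≠ 1) (hn1 : |n| ≠ 1) (a b : ℕ) :
    ∀ L : List (Fin 2 × Bool), L.Chain' Rfree →
      (blocks a b L).Chain'
        (fun p q => p.2 ∈ toSubgroup (θ m).range (θ n).range p.1 → p.1 = q.1) := by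
  intro L
  induction L with
  | nil => intro _; exact List.isChain_nil
  | cons p L ih =>
    obtain ⟨i, e⟩ := p
    intro hch
    rw [blocks]
    refine List.isChain_append.mpr ⟨List.isChain_replicate_of_rel _ (fun _ => rfl), ?_, ?_⟩
    · -- chain' of the cons part
      refine List.isChain_cons.mpr ⟨?_, ih hch.tail⟩
      -- junction between blocks
      intro y hy
      match L with
      | [] => simp [blocks] at hy
      | (i', e') :: L' =>
        have hy1 : y.1 = eps e' := by
          have h1 : (blocks a b ((i', e') :: L')).head?.map Prod.fst = some (eps e') := by
            rw [blocks_head_fst]; simp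
          have h2 : (blocks a b ((i', e') :: L')).head? = some y := Option.mem_def.mp hy
          rw [h2] at h1
          have h3 := h1
          simp only [Option.map_some, Option.some.injEq] at h3
          exact h3
        intro hmem
        rw [hy1]
        -- case analysis on the generators
        fin_cases i <;> fin_cases i'
        · -- 0, 0
          have he : e = e' := (List.isChain_cons_cons.mp hch).1 rfl
          rw [he]
        · -- 0, 1 : the element is ofAdd 1, not in the subgroups
          exfalso
          refine not_mem_toSubgroup hm1 hn1 _ (Or.inl ?_) hmem
          simp [hmk]
        · -- 1, 0
          exfalso
          refine not_mem_toSubgroup hm1 hn1 _ (Or.inr ?_) hmem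
          simp [hmk]
        · -- 1, 1
          have he : e = e' := (List.isChain_cons_cons.mp hch).1 rfl
          rw [he]
    · -- junction from replicate to cons
      intro x hx y hy
      have hx1 : x = (eps e, 1) :=
        List.eq_of_mem_replicate (List.mem_of_mem_getLast? hx)
      have hy1 : ((eps e, (if i = 0 then 1 else (ofAdd (1:ℤ))⁻¹) * hmk L) : ℤˣ × MZ) = y := by
        have := Option.mem_def.mp hy
        simp only [List.head?_cons, Option.some.injEq] at this
        exact this
      intro _
      rw [hx1, ← hy1]

end BSaux

namespace BSaux

variable {m n : ℤ}

/-- images of the two free generators -/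
noncomputable def gg (hm : m ≠ 0) (hn : n ≠ 0) (a b : ℕ) : Fin 2 → HNNBS hm hn := fun i =>
  if i = 0 then t ^ a
  else HNNExtension.of (ofAdd (1:ℤ)) * t ^ b * (HNNExtension.of (ofAdd (1:ℤ)))⁻¹

lemma blocks_prod (hm : m ≠ 0) (hn : n ≠ 0) (a b : ℕ) (ha : a ≠ 0) (hb : b ≠ 0) :
    ∀ L : List (Fin 2 × Bool),
      (HNNExtension.of (hmk L) : HNNBS hm hn) *
        ((blocks a b L).map (fun p => t ^ (p.1 : ℤ) * HNNExtension.of p.2)).prod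
      = (L.map fun x => cond x.2 (gg hm hn a b x.1) (gg hm hn a b x.1)⁻¹).prod := by
  intro L
  induction L with
  | nil => simp [blocks, hmk]
  | cons p L ih =>
    obtain ⟨i, e⟩ := p
    rw [blocks]
    have hcpos : (if i = 0 then a else b) ≠ 0 := by
      split <;> assumption
    rw [List.map_append, List.prod_append, List.map_cons, List.prod_cons,
      List.map_replicate, List.prod_replicate, List.map_cons, List.prod_cons, ← ih]
    rw [map_mul, map_one, mul_one]
    simp only [← mul_assoc]
    congr 2
    -- key identity
    have hpow : ∀ x : HNNBS hm hn, x ^ ((if i = 0 then a else b) - 1) * x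
        = x ^ (if i = 0 then a else b) := by
      intro x
      conv_rhs => rw [show (if i = 0 then a else b) = ((if i = 0 then a else b) - 1) + 1 from
        (Nat.succ_pred_eq_of_pos (Nat.pos_of_ne_zero hcpos)).symm]
      rw [pow_succ]
    rw [mul_assoc (HNNExtension.of (hmk ((i, e) :: L))), hpow]
    fin_cases i <;> cases e <;>
      simp [hmk, eps, gg, zpow_one, inv_pow, mul_inv_rev, map_inv, mul_assoc]

lemma gg_lift_injective (hm : m ≠ 0) (hn : n ≠ 0) (hm1 : |m| ≠ 1) (hn1 : |n| ≠ 1)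
    (a b : ℕ) (ha : a ≠ 0) (hb : b ≠ 0) :
    Function.Injective (FreeGroup.lift (gg hm hn a b)) := by
  rw [injective_iff_map_eq_one]
  intro w hw
  by_contra hw1
  have hL : w.toWord ≠ [] := fun h => hw1 (FreeGroup.toWord_eq_nil_iff.mp h)
  -- build the reduced word
  let R : HNNExtension.NormalWord.ReducedWord MZ (θ m).range (θ n).range :=
    { head := hmk w.toWord
      toList := blocks a b w.toWord
      chain := blocks_chain hm1 hn1 a b w.toWord (chain'_toWord w) }
  have hprod : R.prod (φAB hm hn) = FreeGroup.lift (gg hm hn a b) w := by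
    show (HNNExtension.of (hmk w.toWord) : HNNBS hm hn) *
        ((blocks a b w.toWord).map (fun p => t ^ (p.1 : ℤ) * HNNExtension.of p.2)).prod
      = FreeGroup.lift (gg hm hn a b) w
    rw [blocks_prod hm hn a b ha hb]
    conv_rhs => rw [← FreeGroup.mk_toWord (x := w)]
    rw [FreeGroup.lift_mk]
  have hmem : R.prod (φAB hm hn) ∈
      (HNNExtension.of.range : Subgroup (HNNBS hm hn)) := by
    rw [hprod, hw]
    exact one_mem _
  have := _root_.HNNExtension.ReducedWord.toList_eq_nil_of_mem_of_range (φAB hm hn) R hmem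
  exact blocks_ne_nil a b w.toWord hL this

end BSaux

namespace BSaux

open Equiv Equiv.Perm in
lemma freeGroup_fin2_not_solvable : ¬ IsSolvable (FreeGroup (Fin 2)) := by
  intro h
  have h1 : (finRotate 5).IsCycle := isCycle_finRotate (n := 3)
  have h2 : (finRotate 5).support = Finset.univ := support_finRotate (n := 3)
  have hc := Equiv.Perm.closure_cycle_adjacent_swap h1 h2 0
  set f : Fin 2 → Equiv.Perm (Fin 5) :=
    fun i => if i = 0 then finRotate 5 else Equiv.swap 0 (finRotate 5 0) with hf
  have hrange : (FreeGroup.lift f).range = ⊤ := by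
    rw [FreeGroup.range_lift_eq_closure, ← hc]
    congr 1
    ext x
    simp only [Set.mem_range, Set.mem_insert_iff, Set.mem_singleton_iff]
    constructor
    · rintro ⟨i, rfl⟩
      fin_cases i <;> simp [hf]
    · rintro (rfl | rfl)
      · exact ⟨0, by simp [hf]⟩
      · exact ⟨1, by simp [hf]⟩
  have hsurj : Function.Surjective (FreeGroup.lift f) :=
    MonoidHom.range_eq_top.mp hrange
  exact Equiv.Perm.fin_5_not_solvable (by haveI : Group.IsSolvable (FreeGroup (Fin 2)) := h; exact solvable_of_surjective hsurj)

end BSaux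

namespace BSaux

lemma key (m n : ℤ) (hm : m ≠ 0) (hn : n ≠ 0) (hm1 : |m| ≠ 1) (hn1 : |n| ≠ 1)
    (H : Subgroup (BaumslagSolitar m n)) (hH : H.index ≠ 0) : ¬ IsSolvable H := by
  intro hsol
  obtain ⟨a, ha0, -, haH⟩ := Subgroup.exists_pow_mem_of_index_ne_zero hH (bsr m n)
  obtain ⟨b, hb0, -, hbH⟩ := Subgroup.exists_pow_mem_of_index_ne_zero hH
      (bss m n * bsr m n * (bss m n)⁻¹)
  let ρ : FreeGroup (Fin 2) →* H := FreeGroup.lift (fun i =>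
    if i = 0 then (⟨(bsr m n) ^ a, haH⟩ : H)
    else ⟨(bss m n * bsr m n * (bss m n)⁻¹) ^ b, hbH⟩)
  have hcomp : H.subtype.comp ρ = (Ψ hm hn).comp (FreeGroup.lift (gg hm hn a b)) := by
    apply FreeGroup.ext_hom
    intro i
    fin_cases i
    · simp [ρ, gg, map_pow]
    · simp [ρ, gg, map_pow, conj_pow]
  have hinj2 : Function.Injective (H.subtype.comp ρ) := by
    rw [hcomp]
    exact (Ψ_inj hm hn).comp (gg_lift_injective hm hn hm1 hn1 a b ha0.ne' hb0.ne')
  have hρinj : Function.Injective ρ := fun x y hxy => hinj2 (congrArg H.subtype hxy)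
  exact freeGroup_fin2_not_solvable (by haveI : Group.IsSolvable H := hsol; exact solvable_of_solvable_injective hρinj)

end BSaux

/-- when `|m|, |n|, 1` are pairwise distinct (and `mn ≠ 0`), `BS(m,n)`
embeds in no solvable group; indeed when `|m| ≠ 1` and `|n| ≠ 1`, no finite-index
subgroup of `BS(m,n)` is solvable. -/
theorem stmt10 (m n : ℤ) (hmn : m * n ≠ 0) :
    ((|m| ≠ 1 ∧ |n| ≠ 1 ∧ |m| ≠ |n|) →
      ∀ (G : Type) [Group G], IsSolvable G →
        ∀ f : BaumslagSolitar m n →* G, ¬ Function.Injective f) ∧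
    ((|m| ≠ 1 ∧ |n| ≠ 1) →
      ∀ H : Subgroup (BaumslagSolitar m n), H.index ≠ 0 → ¬ IsSolvable H) := by
  have hm : m ≠ 0 := fun h => hmn (by simp [h])
  have hn : n ≠ 0 := fun h => hmn (by simp [h])
  constructor
  · rintro ⟨hm1, hn1, -⟩ G _ hG f hf
    haveI : IsSolvable (BaumslagSolitar m n) := by haveI : Group.IsSolvable G := hG; exact solvable_of_solvable_injective hf
    exact BSaux.key m n hm hn hm1 hn1 ⊤ (by simp) (by haveI : Group.IsSolvable (BaumslagSolitar m n) := this; exact (inferInstance : Group.IsSolvable (⊤ : Subgroup (BaumslagSolitar m n))))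
  · rintro ⟨hm1, hn1⟩ H hH
    exact BSaux.key m n hm hn hm1 hn1 H hH
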